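/- With B, {e_x}, M = ⊕_{x ∈ H} B e_x ⊗ e_x B and the comultiplication δ_M(e_x ⊗ e_x) = δ(x)(e_x⊗e_x)⊗(e_x⊗e_x) as above: a B-B-bimodule endomorphism α : M → M satisfies the right-comodule intertwining condition δ_M ∘ α = (α ⊗_B id_M) ∘ δ_M if and only if there exist elements α_x ∈ e_x B e_x such that α(e_x ⊗ e_x) = α_x ⊗ e_x for all x ∈ H. -/
import Mathlib


open scoped TensorProduct

noncomputable section

namespace Stmt16

variable (H B : Type) [Fintype H] [DecidableEq H] [Ring B] [Algebra ℂ B]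

/-- The ambient space whose slot `x` is supposed to contain `B e_x ⊗ e_x B`;
the bimodule `M = ⊕_x B e_x ⊗ e_x B` is the set of fixed points of `proj`. -/
abbrev T1 := H → B ⊗[ℂ] B

/-- Concrete model of `M ⊗_B M = ⊕_{x,y} B e_x ⊗ (e_x B e_y) ⊗ e_y B`. -/
abbrev T2 := H → H → B ⊗[ℂ] (B ⊗[ℂ] B)

/-- Concrete model of `M ⊗_B M ⊗_B M`. -/
abbrev T3 := H → H → H → B ⊗[ℂ] (B ⊗[ℂ] (B ⊗[ℂ] B))

variable {H B}

/-- Projection of the ambient space onto the intended bimodule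
`M = ⊕_x B e_x ⊗ e_x B`. -/
def proj (e : H → B) : T1 H B →ₗ[ℂ] T1 H B :=
  LinearMap.pi fun x =>
    (TensorProduct.map (LinearMap.mulRight ℂ (e x)) (LinearMap.mulLeft ℂ (e x))).comp
      (LinearMap.proj x)

/-- Left action of `B` on `M`. -/
def lact (b : B) : T1 H B →ₗ[ℂ] T1 H B :=
  LinearMap.pi fun x =>
    (TensorProduct.map (LinearMap.mulLeft ℂ b) LinearMap.id).comp (LinearMap.proj x)

/-- Right action of `B` on `M`. -/
def ract (b : B) : T1 H B →ₗ[ℂ] T1 H B :=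
  LinearMap.pi fun x =>
    (TensorProduct.map LinearMap.id (LinearMap.mulRight ℂ b)).comp (LinearMap.proj x)

/-- Left action of `B` on `M ⊗_B M`. -/
def lact2 (b : B) : T2 H B →ₗ[ℂ] T2 H B :=
  LinearMap.pi fun x => LinearMap.pi fun y =>
    TensorProduct.map (LinearMap.mulLeft ℂ b) LinearMap.id ∘ₗ
      LinearMap.proj y ∘ₗ LinearMap.proj x

/-- Right action of `B` on `M ⊗_B M`. -/
def ract2 (b : B) : T2 H B →ₗ[ℂ] T2 H B :=
  LinearMap.pi fun x => LinearMap.pi fun y =>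
    TensorProduct.map LinearMap.id
        (TensorProduct.map LinearMap.id (LinearMap.mulRight ℂ b)) ∘ₗ
      LinearMap.proj y ∘ₗ LinearMap.proj x

/-- Insertion of `e x` in the middle: `a ⊗ b ↦ a ⊗ (e x ⊗ b)`. -/
def ins (e : H → B) (x : H) : B ⊗[ℂ] B →ₗ[ℂ] B ⊗[ℂ] (B ⊗[ℂ] B) :=
  TensorProduct.map LinearMap.id (TensorProduct.mk ℂ B B (e x))

/-- The comultiplication `δ_M : M → M ⊗_B M`,
`a e_x ⊗ e_x b ↦ δ(x)·(a e_x ⊗ e_x) ⊗ (e_x ⊗ e_x b)`, in the concrete model. -/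
def comul (e : H → B) (ds : H → ℂ) : T1 H B →ₗ[ℂ] T2 H B :=
  LinearMap.pi fun x => LinearMap.pi fun y =>
    if x = y then (ds x • ins e x).comp (LinearMap.proj x) else 0

/-- The counit `ε_M : M → B`, `a e_x ⊗ e_x b ↦ δ(x)⁻¹ a e_x b`. -/
def counit (ds : H → ℂ) : T1 H B →ₗ[ℂ] B :=
  ∑ x, (ds x)⁻¹ • ((LinearMap.mul' ℂ B).comp (LinearMap.proj x))


/-- Inclusion of the slot-`x` component. -/
def single (x : H) : B ⊗[ℂ] B →ₗ[ℂ] T1 H B :=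
  LinearMap.single ℂ (fun _ : H => B ⊗[ℂ] B) x

/-- Distribute a tensor factor over the finite product. -/
def distrib : ((H → B ⊗[ℂ] B) ⊗[ℂ] B) →ₗ[ℂ] (H → (B ⊗[ℂ] B) ⊗[ℂ] B) :=
  LinearMap.pi fun z => TensorProduct.map (LinearMap.proj z) LinearMap.id

/-- Recombination `(a' ⊗ c') ⊗ b ↦ a' ⊗ ((c'·e_y) ⊗ b)` realizing the balanced
tensor `(a' ⊗ c') ⊗_B (e_y ⊗ b)` in the concrete model. -/
def recombine (e : H → B) (y : H) :
    (B ⊗[ℂ] B) ⊗[ℂ] B →ₗ[ℂ] B ⊗[ℂ] (B ⊗[ℂ] B) :=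
  (TensorProduct.assoc ℂ B B B).toLinearMap ∘ₗ
    TensorProduct.map (TensorProduct.map LinearMap.id (LinearMap.mulRight ℂ (e y)))
      LinearMap.id

/-- The map `α ⊗_B id_M : M ⊗_B M → M ⊗_B M` induced by a bimodule
endomorphism `α` of `M`, in the concrete model. -/
def atens (e : H → B) (α : T1 H B →ₗ[ℂ] T1 H B) : T2 H B →ₗ[ℂ] T2 H B :=
  LinearMap.pi fun z => LinearMap.pi fun y =>
    ∑ x, recombine e y ∘ₗ LinearMap.proj z ∘ₗ distrib ∘ₗ
      TensorProduct.map (α ∘ₗ single x) LinearMap.id ∘ₗ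
      (TensorProduct.assoc ℂ B B B).symm.toLinearMap ∘ₗ
      LinearMap.proj y ∘ₗ LinearMap.proj x

variable (e : H → B) (ds : H → ℂ)

lemma ins_tmul (x : H) (a b : B) : ins e x (a ⊗ₜ[ℂ] b) = a ⊗ₜ[ℂ] ((e x) ⊗ₜ[ℂ] b) := by
  simp [ins]

lemma comul_apply (mm : T1 H B) (z y : H) :
    comul e ds mm z y = if z = y then ds z • ins e z (mm z) else 0 := by
  simp only [comul, LinearMap.pi_apply]
  split_ifs with h <;> simp

lemma atens_apply (α : T1 H B →ₗ[ℂ] T1 H B) (S : T2 H B) (z y : H) :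
    atens e α S z y = ∑ x, recombine e y
      (TensorProduct.map (LinearMap.proj z) LinearMap.id
        (TensorProduct.map (α ∘ₗ single x) LinearMap.id
          ((TensorProduct.assoc ℂ B B B).symm (S x y)))) := by
  simp [atens, distrib, LinearMap.pi_apply]
set_option linter.unusedSectionVars false

lemma proj_apply (mm : T1 H B) (z : H) :
    proj e mm z = TensorProduct.map (LinearMap.mulRight ℂ (e z)) (LinearMap.mulLeft ℂ (e z)) (mm z) := rfl

lemma lact_apply (b : B) (mm : T1 H B) (z : H) :
    lact b mm z = TensorProduct.map (LinearMap.mulLeft ℂ b) LinearMap.id (mm z) := rfl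

lemma ract_apply (b : B) (mm : T1 H B) (z : H) :
    ract b mm z = TensorProduct.map LinearMap.id (LinearMap.mulRight ℂ b) (mm z) := rfl

lemma single_eq (x : H) (t : B ⊗[ℂ] B) : single x t = Pi.single x t := rfl

lemma lact_single_tmul (b : B) (x : H) (u v : B) :
    lact b (Pi.single x (u ⊗ₜ[ℂ] v)) = Pi.single x ((b * u) ⊗ₜ[ℂ] v) := by
  funext z
  rcases eq_or_ne z x with h | h
  · subst h; simp [lact_apply]
  · simp [lact_apply, Pi.single_eq_of_ne h]

lemma ract_single_tmul (b : B) (x : H) (u v : B) :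
    ract b (Pi.single x (u ⊗ₜ[ℂ] v)) = Pi.single x (u ⊗ₜ[ℂ] (v * b)) := by
  funext z
  rcases eq_or_ne z x with h | h
  · subst h; simp [ract_apply]
  · simp [ract_apply, Pi.single_eq_of_ne h]

lemma proj_single_tmul (x : H) (u v : B) :
    proj e (Pi.single x (u ⊗ₜ[ℂ] v)) = Pi.single x ((u * e x) ⊗ₜ[ℂ] (e x * v)) := by
  funext z
  rcases eq_or_ne z x with h | h
  · subst h; simp [proj_apply]
  · simp [proj_apply, Pi.single_eq_of_ne h]
lemma recombine_tmul (y : H) (u v w : B) :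
    recombine e y ((u ⊗ₜ[ℂ] v) ⊗ₜ[ℂ] w) = u ⊗ₜ[ℂ] ((v * e y) ⊗ₜ[ℂ] w) := by
  simp [recombine]

lemma assoc_symm_zero : (TensorProduct.assoc ℂ B B B).symm (0 : B ⊗[ℂ] (B ⊗[ℂ] B)) = 0 :=
  (TensorProduct.assoc ℂ B B B).symm.map_zero

variable {e ds} in
lemma key_gen (horth : ∀ x y, e x * e y = if x = y then e x else 0)
    (α : T1 H B →ₗ[ℂ] T1 H B)
    (hαl : ∀ (b : B) (mm : T1 H B), α (lact b mm) = lact b (α mm))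
    (hαr : ∀ (b : B) (mm : T1 H B), α (ract b mm) = ract b (α mm))
    (x : H) (c : B)
    (hgen : α (Pi.single x ((e x) ⊗ₜ[ℂ] (e x))) = Pi.single x (c ⊗ₜ[ℂ] (e x)))
    (a b : B) :
    comul e ds (α (Pi.single x ((a * e x) ⊗ₜ[ℂ] (e x * b)))) =
      atens e α (comul e ds (Pi.single x ((a * e x) ⊗ₜ[ℂ] (e x * b)))) := by
  have hee : e x * e x = e x := by simpa using horth x x
  have hα1 : α (Pi.single x ((a * e x) ⊗ₜ[ℂ] (e x * b)))
      = Pi.single x ((a * c) ⊗ₜ[ℂ] (e x * b)) := by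
    have h1 : Pi.single x ((a * e x) ⊗ₜ[ℂ] (e x * b))
        = lact a (ract b (Pi.single x ((e x) ⊗ₜ[ℂ] (e x)))) := by
      rw [ract_single_tmul, lact_single_tmul]
    rw [h1, hαl, hαr, hgen, ract_single_tmul, lact_single_tmul]
  have hα2 : α (single x ((a * e x) ⊗ₜ[ℂ] (e x)))
      = Pi.single x ((a * c) ⊗ₜ[ℂ] (e x)) := by
    have h1 : (single x ((a * e x) ⊗ₜ[ℂ] (e x)) : T1 H B)
        = lact a (Pi.single x ((e x) ⊗ₜ[ℂ] (e x))) := by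
      rw [single_eq, lact_single_tmul]
    rw [h1, hαl, hgen, lact_single_tmul]
  funext z y
  rw [hα1, comul_apply, atens_apply]
  rw [Finset.sum_eq_single x]
  · rw [comul_apply]
    rcases eq_or_ne x y with hxy | hxy
    · subst hxy
      rw [if_pos (rfl : x = x), Pi.single_eq_same, ins_tmul, map_smul, map_smul,
        map_smul, map_smul, TensorProduct.assoc_symm_tmul, TensorProduct.map_tmul, LinearMap.comp_apply, hα2,
        TensorProduct.map_tmul]
      simp only [LinearMap.id_coe, id_eq, LinearMap.proj_apply]
      rcases eq_or_ne z x with hzx | hzx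
      · subst hzx
        rw [if_pos rfl, Pi.single_eq_same, Pi.single_eq_same, recombine_tmul, ins_tmul, hee]
      · rw [if_neg hzx, Pi.single_eq_of_ne hzx]
        simp [TensorProduct.zero_tmul]
    · rw [if_neg hxy]
      rw [assoc_symm_zero, map_zero, map_zero, map_zero]
      rcases eq_or_ne z y with hzy | hzy
      · subst hzy
        rw [if_pos rfl, Pi.single_eq_of_ne (fun h => hxy h.symm)]
        simp
      · rw [if_neg hzy]
  · intro x' _ hx'
    rw [comul_apply]
    rcases eq_or_ne x' y with h | h
    · subst h
      rw [if_pos rfl, Pi.single_eq_of_ne hx']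
      simp [assoc_symm_zero]
    · rw [if_neg h, assoc_symm_zero, map_zero, map_zero, map_zero]
  · intro h; exact absurd (Finset.mem_univ x) h
/-- `a ⊗ b ↦ a ⊗ (b ⊗ e x)` -/
def insp (e : H → B) (x : H) : B ⊗[ℂ] B →ₗ[ℂ] B ⊗[ℂ] (B ⊗[ℂ] B) :=
  TensorProduct.map LinearMap.id ((TensorProduct.mk ℂ B B).flip (e x))

lemma insp_tmul (x : H) (a b : B) : insp e x (a ⊗ₜ[ℂ] b) = a ⊗ₜ[ℂ] (b ⊗ₜ[ℂ] e x) := by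
  simp [insp]

/-- `a ⊗ b ↦ f b • a` -/
def hmap (f : B →ₗ[ℂ] ℂ) : B ⊗[ℂ] B →ₗ[ℂ] B :=
  (TensorProduct.rid ℂ B).toLinearMap ∘ₗ TensorProduct.map LinearMap.id f

lemma hmap_tmul (f : B →ₗ[ℂ] ℂ) (a b : B) : hmap f (a ⊗ₜ[ℂ] b) = f b • a := by
  simp [hmap]

/-- `a ⊗ b ↦ f a • b` -/
def gmap (f : B →ₗ[ℂ] ℂ) : B ⊗[ℂ] B →ₗ[ℂ] B :=
  (TensorProduct.lid ℂ B).toLinearMap ∘ₗ TensorProduct.map f LinearMap.id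

lemma gmap_tmul (f : B →ₗ[ℂ] ℂ) (a b : B) : gmap f (a ⊗ₜ[ℂ] b) = f a • b := by
  simp [gmap]

variable {e} in
lemma recombine_fixed {x : H} (hee : e x * e x = e x) (t : B ⊗[ℂ] B)
    (ht : TensorProduct.map LinearMap.id (LinearMap.mulRight ℂ (e x)) t = t) :
    recombine e x (t ⊗ₜ[ℂ] (e x)) = insp e x t := by
  have key : (recombine e x ∘ₗ (TensorProduct.mk ℂ (B ⊗[ℂ] B) B).flip (e x)) ∘ₗ
        TensorProduct.map LinearMap.id (LinearMap.mulRight ℂ (e x))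
      = insp e x ∘ₗ TensorProduct.map LinearMap.id (LinearMap.mulRight ℂ (e x)) := by
    apply TensorProduct.ext'
    intro a b
    simp [recombine, insp, mul_assoc, hee]
  have := LinearMap.congr_fun key t
  simpa [ht] using this

variable {e} in
lemma retract_insp {x : H} {f : B →ₗ[ℂ] ℂ} (hf : f (e x) = 1) (t : B ⊗[ℂ] B) :
    TensorProduct.map LinearMap.id (hmap f) (insp e x t) = t := by
  have key : TensorProduct.map LinearMap.id (hmap f) ∘ₗ insp e x = LinearMap.id := by
    apply TensorProduct.ext'
    intro a b
    simp [insp, hmap_tmul, hf]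
  exact LinearMap.congr_fun key t

variable {e} in
lemma retract_ins {x : H} {f : B →ₗ[ℂ] ℂ} (hf : f (e x) = 1) (t : B ⊗[ℂ] B) :
    TensorProduct.map LinearMap.id (gmap f) (ins e x t) = t := by
  have key : TensorProduct.map LinearMap.id (gmap f) ∘ₗ ins e x = LinearMap.id := by
    apply TensorProduct.ext'
    intro a b
    simp [ins, gmap_tmul, hf]
  exact LinearMap.congr_fun key t

variable {e} in
lemma gmap_insp {x : H} (f : B →ₗ[ℂ] ℂ) (t : B ⊗[ℂ] B) :
    TensorProduct.map LinearMap.id (gmap f) (insp e x t) = (hmap f t) ⊗ₜ[ℂ] (e x) := by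
  have key : TensorProduct.map LinearMap.id (gmap f) ∘ₗ insp e x
      = (TensorProduct.mk ℂ B B).flip (e x) ∘ₗ hmap f := by
    apply TensorProduct.ext'
    intro a b
    simp [insp, gmap_tmul, hmap_tmul, TensorProduct.smul_tmul']
  exact LinearMap.congr_fun key t

lemma exists_functional {v : B} (hv : v ≠ 0) : ∃ f : B →ₗ[ℂ] ℂ, f v = 1 := by
  have h : ¬ ∀ φ : Module.Dual ℂ B, φ v = 0 := by
    rw [Module.forall_dual_apply_eq_zero_iff]; exact hv
  push_neg at h
  obtain ⟨f, hf⟩ := h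
  exact ⟨(f v)⁻¹ • f, by simp [inv_mul_cancel₀ hf]⟩
variable {e ds} in
lemma exists_c (horth : ∀ x y, e x * e y = if x = y then e x else 0)
    (hds : ∀ x, ds x ≠ 0)
    (α : T1 H B →ₗ[ℂ] T1 H B)
    (hαl : ∀ (b : B) (mm : T1 H B), α (lact b mm) = lact b (α mm))
    (hαr : ∀ (b : B) (mm : T1 H B), α (ract b mm) = ract b (α mm))
    (hαM : ∀ mm : T1 H B, proj e mm = mm → proj e (α mm) = α mm)
    (hint : ∀ mm : T1 H B, proj e mm = mm →
        comul e ds (α mm) = atens e α (comul e ds mm))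
    (x : H) :
    ∃ cx : B, e x * cx * e x = cx ∧
      α (Pi.single x ((e x) ⊗ₜ[ℂ] (e x))) = Pi.single x (cx ⊗ₜ[ℂ] (e x)) := by
  have hee : e x * e x = e x := by simpa using horth x x
  by_cases hx : e x = 0
  · refine ⟨0, by simp, ?_⟩
    rw [hx]
    simp
  obtain ⟨f, hf⟩ := exists_functional hx
  set m : T1 H B := Pi.single x ((e x) ⊗ₜ[ℂ] (e x)) with hm_def
  have hm : proj e m = m := by rw [hm_def, proj_single_tmul, hee]
  set A : T1 H B := α m with hA
  have hfix : proj e A = A := hαM m hm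
  have hractA : ract (e x) A = A := by
    rw [hA, ← hαr, hm_def, ract_single_tmul, hee]
  have hlactA : lact (e x) A = A := by
    rw [hA, ← hαl, hm_def, lact_single_tmul, hee]
  have heq := hint m hm
  have hcomp : ∀ z y : H, (if z = y then ds z • ins e z (A z) else 0)
      = (if x = y then ds x • recombine e y ((A z) ⊗ₜ[ℂ] (e x)) else 0) := by
    intro z y
    have h0 := congrFun (congrFun heq z) y
    rw [comul_apply, atens_apply] at h0
    rw [Finset.sum_eq_single x] at h0
    · rw [comul_apply] at h0
      rcases eq_or_ne x y with hxy | hxy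
      · subst hxy
        rw [if_pos rfl, hm_def, Pi.single_eq_same, ins_tmul, map_smul, map_smul, map_smul,
          map_smul, TensorProduct.assoc_symm_tmul, TensorProduct.map_tmul,
          TensorProduct.map_tmul] at h0
        simp only [LinearMap.comp_apply, LinearMap.id_coe, id_eq, LinearMap.proj_apply] at h0
        rw [if_pos rfl]
        rw [single_eq] at h0
        exact h0
      · rw [if_neg hxy, assoc_symm_zero, map_zero, map_zero, map_zero] at h0
        rw [if_neg hxy]
        exact h0
    · intro x' _ hx'
      rw [comul_apply]
      rcases eq_or_ne x' y with h | h
      · subst h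
        rw [if_pos rfl, hm_def, Pi.single_eq_of_ne hx']
        simp [assoc_symm_zero]
      · rw [if_neg h, assoc_symm_zero, map_zero, map_zero, map_zero]
    · intro h; exact absurd (Finset.mem_univ x) h
  have hractAz : ∀ z, TensorProduct.map LinearMap.id (LinearMap.mulRight ℂ (e x)) (A z) = A z :=
    fun z => congrFun hractA z
  have hz0 : ∀ z, z ≠ x → A z = 0 := by
    intro z hz
    have h1 := hcomp z x
    rw [if_neg hz, if_pos rfl, recombine_fixed hee _ (hractAz z)] at h1
    have h2 : insp e x (A z) = 0 := by
      rcases smul_eq_zero.mp h1.symm with h | h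
      · exact absurd h (hds x)
      · exact h
    have := retract_insp hf (A z)
    rw [h2, map_zero] at this
    exact this.symm
  have hxx : ins e x (A x) = insp e x (A x) := by
    have h1 := hcomp x x
    rw [if_pos rfl, if_pos rfl, recombine_fixed hee _ (hractAz x)] at h1
    exact smul_right_injective _ (hds x) h1
  set c0 : B := hmap f (A x) with hc0
  have hAx : A x = c0 ⊗ₜ[ℂ] (e x) := by
    have := retract_ins hf (A x)
    rw [hxx, gmap_insp] at this
    exact this.symm
  -- relations from proj- and lact-fixedness
  have e1 : (c0 * e x) ⊗ₜ[ℂ] (e x) = c0 ⊗ₜ[ℂ] (e x) := by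
    have := congrFun hfix x
    rw [proj_apply, hAx, TensorProduct.map_tmul] at this
    simpa [hee] using this
  have e2 : (e x * c0) ⊗ₜ[ℂ] (e x) = c0 ⊗ₜ[ℂ] (e x) := by
    have := congrFun hlactA x
    rw [lact_apply, hAx, TensorProduct.map_tmul] at this
    simpa using this
  refine ⟨e x * c0 * e x, by rw [← mul_assoc, ← mul_assoc, hee, mul_assoc, mul_assoc, hee,
    ← mul_assoc], ?_⟩
  have e3 : (e x * c0 * e x) ⊗ₜ[ℂ] (e x) = c0 ⊗ₜ[ℂ] (e x) := by
    have h4 := congrArg (TensorProduct.map (LinearMap.mulLeft ℂ (e x)) (LinearMap.id)) e1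
    rw [TensorProduct.map_tmul, TensorProduct.map_tmul] at h4
    simp only [LinearMap.mulLeft_apply, LinearMap.id_coe, id_eq] at h4
    rw [mul_assoc]
    rw [h4]
    exact e2
  funext z
  rcases eq_or_ne z x with h | h
  · subst h
    rw [hAx, Pi.single_eq_same, e3]
  · rw [hz0 z h, Pi.single_eq_of_ne h]
/-- a `B`-`B`-bimodule endomorphism `α` of
`M = ⊕_x B e_x ⊗ e_x B` satisfies the right-comodule intertwining condition
`δ_M ∘ α = (α ⊗_B id_M) ∘ δ_M` if and only if there exist `α_x ∈ e_x B e_x`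
such that `α(e_x ⊗ e_x) = α_x ⊗ e_x` for all `x`. -/
theorem stmt_16 [FiniteDimensional ℂ B]
    (e : H → B)
    (horth : ∀ x y, e x * e y = if x = y then e x else 0)
    (hcomplete : ∑ x, e x = 1)
    (ds : H → ℂ) (hds : ∀ x, ds x ≠ 0)
    (α : T1 H B →ₗ[ℂ] T1 H B)
    (hαl : ∀ (b : B) (mm : T1 H B), α (lact b mm) = lact b (α mm))
    (hαr : ∀ (b : B) (mm : T1 H B), α (ract b mm) = ract b (α mm))
    (hαM : ∀ mm : T1 H B, proj e mm = mm → proj e (α mm) = α mm) :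
    (∀ mm : T1 H B, proj e mm = mm →
        comul e ds (α mm) = atens e α (comul e ds mm)) ↔
    ∃ c : H → B, (∀ x, e x * c x * e x = c x) ∧
      ∀ x, α (Pi.single x ((e x) ⊗ₜ[ℂ] (e x)))
        = Pi.single x ((c x) ⊗ₜ[ℂ] (e x)) := by
  constructor
  · intro hint
    choose c hc1 hc2 using exists_c horth hds α hαl hαr hαM hint
    exact ⟨c, hc1, hc2⟩
  · rintro ⟨c, hc1, hc2⟩ mm hmm
    have hmm' : mm = ∑ x, Pi.single x
        (TensorProduct.map (LinearMap.mulRight ℂ (e x)) (LinearMap.mulLeft ℂ (e x)) (mm x)) := by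
      conv_lhs => rw [← hmm, ← Finset.univ_sum_single (proj e mm)]
      rfl
    rw [hmm', map_sum, map_sum, map_sum, map_sum]
    refine Finset.sum_congr rfl fun x _ => ?_
    generalize (mm x) = t
    induction t using TensorProduct.induction_on with
    | zero => simp
    | tmul a b =>
      rw [TensorProduct.map_tmul]
      simp only [LinearMap.mulRight_apply, LinearMap.mulLeft_apply]
      exact key_gen horth α hαl hαr x (c x) (hc2 x) a b
    | add u v hu hv =>
      rw [map_add, Pi.single_add, map_add, map_add, map_add, map_add, hu, hv]

end Stmt16

end
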